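/- arXiv:2106.03820 — 3 statements merged into one kernel-verified Lean document; each statement's English description precedes it below -/
import Mathlib

section
/- Under the dummy-encoding setup, the Shapley value of X computed by treating (Z_1,...,Z_{K−1}) as a single coalesced variable equals the Shapley value of X in the original model: φ_X(f̃; Z_{1:K−1}) = φ_X(f). -/
open MeasureTheory ProbabilityTheory

/-- Dummy encoding of a categorical value `z ∈ {1,…,K}` into `K-1` indicator
variables: `(dummyEnc K z) j = 1_{z = j}`. -/
def dummyEnc (K : ℕ) (z : Fin K) : Fin (K - 1) → Bool := fun j => decide (z.val = j.val)

-- Each category below `K - 1` is detected by its own coordinate; `K - 1` is the reference level,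
-- encoded as all zeros.
lemma dummyEnc_injective (K : ℕ) : Function.Injective (dummyEnc K) := by
  intro a b hab
  have hcoord (j : Fin (K - 1)) : a.val = j.val ↔ b.val = j.val := by
    simpa only [dummyEnc, decide_eq_decide] using congrFun hab j
  by_cases ha : a.val < K - 1
  · exact Fin.ext ((hcoord ⟨a.val, ha⟩).mp rfl).symm
  by_cases hb : b.val < K - 1
  · exact Fin.ext ((hcoord ⟨b.val, hb⟩).mpr rfl)
  · exact Fin.ext (by omega)

theorem shapley_X_coalesced_dummies_eq_original_general
    {Ω : Type*} [MeasurableSpace Ω] (μ : Measure Ω)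
    (K : ℕ) (X : Ω → ℝ) (Z : Ω → Fin K)
    (f : ℝ → Fin K → ℝ) (ftilde : ℝ → (Fin (K - 1) → Bool) → ℝ)
    (hf : ∀ a b, f a b = ftilde a (dummyEnc K b))
    (x : ℝ) (z : Fin K) :
    ((1 : ℝ) / 2) * ((∫ ω, ftilde (X ω) (dummyEnc K (Z ω))
          ∂(ProbabilityTheory.cond μ {ω | X ω = x})) -
        ∫ ω, ftilde (X ω) (dummyEnc K (Z ω)) ∂μ) +
      ((1 : ℝ) / 2) * (ftilde x (dummyEnc K z) -
        ∫ ω, ftilde (X ω) (dummyEnc K (Z ω))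
          ∂(ProbabilityTheory.cond μ {ω | dummyEnc K (Z ω) = dummyEnc K z})) =
    ((1 : ℝ) / 2) * ((∫ ω, f (X ω) (Z ω)
          ∂(ProbabilityTheory.cond μ {ω | X ω = x})) -
        ∫ ω, f (X ω) (Z ω) ∂μ) +
      ((1 : ℝ) / 2) * (f x z -
        ∫ ω, f (X ω) (Z ω) ∂(ProbabilityTheory.cond μ {ω | Z ω = z})) := by
  have hcoalesced : {ω | dummyEnc K (Z ω) = dummyEnc K z} = {ω | Z ω = z} :=
    Set.ext fun _ => (dummyEnc_injective K).eq_iff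
  simp only [hf, hcoalesced]

/-- The Shapley value of `X` computed by treating the dummy block
`(Z_1,…,Z_{K-1})` as a single coalesced variable equals the Shapley value of
`X` in the original model: `φ_X(f̃; Z_{1:K-1}) = φ_X(f)`. -/
theorem shapley_X_coalesced_dummies_eq_original
    {Ω : Type*} [MeasurableSpace Ω] (μ : Measure Ω) [IsProbabilityMeasure μ]
    (K : ℕ) (X : Ω → ℝ) (Z : Ω → Fin K) (hX : Measurable X) (hZ : Measurable Z)
    (f : ℝ → Fin K → ℝ) (ftilde : ℝ → (Fin (K - 1) → Bool) → ℝ)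
    (hf : ∀ a b, f a b = ftilde a (dummyEnc K b))
    (x : ℝ) (z : Fin K)
    (hx : μ {ω | X ω = x} ≠ 0) (hz : μ {ω | Z ω = z} ≠ 0) :
    ((1 : ℝ) / 2) * ((∫ ω, ftilde (X ω) (dummyEnc K (Z ω))
          ∂(ProbabilityTheory.cond μ {ω | X ω = x})) -
        ∫ ω, ftilde (X ω) (dummyEnc K (Z ω)) ∂μ) +
      ((1 : ℝ) / 2) * (ftilde x (dummyEnc K z) -
        ∫ ω, ftilde (X ω) (dummyEnc K (Z ω))
          ∂(ProbabilityTheory.cond μ {ω | dummyEnc K (Z ω) = dummyEnc K z})) =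
    ((1 : ℝ) / 2) * ((∫ ω, f (X ω) (Z ω)
          ∂(ProbabilityTheory.cond μ {ω | X ω = x})) -
        ∫ ω, f (X ω) (Z ω) ∂μ) +
      ((1 : ℝ) / 2) * (f x z -
        ∫ ω, f (X ω) (Z ω) ∂(ProbabilityTheory.cond μ {ω | Z ω = z})) :=
  shapley_X_coalesced_dummies_eq_original_general μ K X Z f ftilde hf x z
end

section
/- Consider a tree-based model f(x) = Σ_{m=1}^M f_m 1_{L_m}(x) with leaves L_m, and the Leaf value function v(S) = Σ_{m ∈ C(S,x)} w_m f_m P(X ∈ L_m | X_S ∈ L_m^S) (no normalization, w_m = 1). Then the Shapley value of feature i decomposes as a sum over compatible leaves: φ_{X_i} = Σ_m φ_{X_i}^m, where φ_{X_i}^m = (1/p) Σ_{S' ⊆ S_m\{i}} [C(p−1,|S'|)⁻¹ + Σ_{∅≠Z ⊆ complement of S_m∪{i}} C(p−1,|Z|+|S'|)⁻¹] · f_m · [P(L_m | X_{S'∪{i}} ∈ L_m^{S'∪{i}}) − P(L_m | X_{S'} ∈ L_m^{S'})], and S_m is the set of split variables of leaf m. -/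
/-!
Coordinates outside the split set `S_m` impose no constraint on leaf `m`, so both the
compatibility indicator and the conditional probability of leaf `m` only see `S ∩ S_m`.
After exchanging the sums over coalitions and leaves, split each coalition
`S ⊆ {1,…,p} \ {i}` as `S' ∪ Z` with `S' ⊆ S_m \ {i}` and `Z` outside `S_m ∪ {i}`:
the leaf term depends on `S'` only, so the Shapley weights `C(p-1, |S'| + |Z|)⁻¹` are summed
over `Z`, the empty `Z` giving the leading weight `C(p-1, |S'|)⁻¹`.
-/

open MeasureTheory ProbabilityTheory Finset

attribute [local instance] Classical.propDecidable

namespace Finset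

variable {α : Type*} [DecidableEq α]

theorem sum_powerset_union_of_disjoint {β : Type*} [AddCommMonoid β] {A B : Finset α}
    (h : Disjoint A B) (f : Finset α → β) :
    ∑ S ∈ (A ∪ B).powerset, f S = ∑ S ∈ A.powerset, ∑ Z ∈ B.powerset, f (S ∪ Z) := by
  rw [← sum_product']
  refine sum_nbij' (fun S => (S ∩ A, S ∩ B)) (fun q => q.1 ∪ q.2) ?_ ?_ ?_ ?_ ?_ <;>
    simp only [mem_product, mem_powerset]
  · exact fun _ _ => ⟨inter_subset_right, inter_subset_right⟩
  · exact fun q hq => union_subset_union hq.1 hq.2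
  · exact fun S hS => by rw [← inter_union_distrib_left, inter_eq_left.2 hS]
  · rintro ⟨S, Z⟩ ⟨hS : S ⊆ A, hZ : Z ⊆ B⟩
    rw [union_inter_distrib_right, union_inter_distrib_right, inter_eq_left.2 hS,
      inter_eq_left.2 hZ, disjoint_iff_inter_eq_empty.1 (h.mono_left hS),
      disjoint_iff_inter_eq_empty.1 (h.mono_right hZ).symm, union_empty, empty_union]
  · exact fun S hS => by rw [← inter_union_distrib_left, inter_eq_left.2 hS]

theorem sum_powerset_union_mul_of_union_eq {R : Type*} [Semiring R] {A B : Finset α}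
    (h : Disjoint A B) (w : ℕ → R) (g : Finset α → R)
    (hg : ∀ S ⊆ A, ∀ Z ⊆ B, g (S ∪ Z) = g S) :
    ∑ S ∈ (A ∪ B).powerset, w #S * g S =
      ∑ S ∈ A.powerset, (∑ Z ∈ B.powerset, w (#Z + #S)) * g S := by
  rw [sum_powerset_union_of_disjoint h]
  refine sum_congr rfl fun S hS => ?_
  rw [sum_mul]
  refine sum_congr rfl fun Z hZ => ?_
  rw [mem_powerset] at hS hZ
  rw [hg S hS Z hZ, card_union_of_disjoint (h.mono hS hZ), add_comm]

theorem erase_univ_eq_union [Fintype α] (s : Finset α) (a : α) :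
    univ.erase a = s.erase a ∪ (univ \ insert a s) := by
  ext j; by_cases j ∈ s <;> by_cases j = a <;> simp_all

theorem disjoint_erase_sdiff_insert (s t : Finset α) (a : α) :
    Disjoint (s.erase a) (t \ insert a s) :=
  disjoint_left.2 fun _ hj hj' => (mem_sdiff.1 hj').2 (mem_insert_of_mem (mem_of_mem_erase hj))

theorem forall_mem_union_iff_of_eq_univ {E : Type*} {L : α → Set E} {S Z : Finset α}
    (hZ : ∀ j ∈ Z, L j = Set.univ) (y : α → E) :
    (∀ j ∈ S ∪ Z, y j ∈ L j) ↔ ∀ j ∈ S, y j ∈ L j := by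
  refine ⟨fun hy j hj => hy j (mem_union_left Z hj), fun hy j hj => ?_⟩
  rcases mem_union.1 hj with hS | hZ'
  · exact hy j hS
  · simp [hZ j hZ']

end Finset

theorem shapley_leaf_decomposition_general
    {Ω : Type*} [MeasurableSpace Ω] (μ : Measure Ω)
    (p M : ℕ) (X : Ω → Fin p → ℝ)
    (L : Fin M → Fin p → Set ℝ)
    (fm : Fin M → ℝ) (Sm : Fin M → Finset (Fin p))
    (htrivial : ∀ m, ∀ j ∉ Sm m, L m j = Set.univ)
    (x : Fin p → ℝ) (i : Fin p)
    (P : Fin M → Finset (Fin p) → ℝ)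
    (hP : ∀ m S, P m S =
      (ProbabilityTheory.cond μ {ω | ∀ j ∈ S, X ω j ∈ L m j}
        {ω | ∀ j, X ω j ∈ L m j}).toReal)
    (v : Finset (Fin p) → ℝ)
    (hv : ∀ S, v S = ∑ m : Fin M, fm m *
      (if ∀ j ∈ S, x j ∈ L m j then P m S else 0)) :
    (p : ℝ)⁻¹ * ∑ S ∈ (Finset.univ.erase i).powerset,
        (((p - 1).choose S.card : ℕ) : ℝ)⁻¹ * (v (insert i S) - v S) =
      ∑ m : Fin M, (p : ℝ)⁻¹ * ∑ S' ∈ ((Sm m).erase i).powerset,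
        ((((p - 1).choose S'.card : ℕ) : ℝ)⁻¹ +
            ∑ Z ∈ (Finset.univ \ insert i (Sm m)).powerset.erase ∅,
              (((p - 1).choose (Z.card + S'.card) : ℕ) : ℝ)⁻¹) *
          (fm m *
            ((if ∀ j ∈ insert i S', x j ∈ L m j then P m (insert i S') else 0) -
              (if ∀ j ∈ S', x j ∈ L m j then P m S' else 0))) := by
  have hleaf : ∀ m S, ∀ Z ⊆ univ \ insert i (Sm m),
      (if ∀ j ∈ S ∪ Z, x j ∈ L m j then P m (S ∪ Z) else 0) =
        if ∀ j ∈ S, x j ∈ L m j then P m S else 0 := by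
    intro m S Z hZ
    have htriv : ∀ j ∈ Z, L m j = Set.univ := fun j hj =>
      htrivial m j fun hj' => (mem_sdiff.1 (hZ hj)).2 (mem_insert_of_mem hj')
    simp_rw [hP, forall_mem_union_iff_of_eq_univ htriv]
  simp_rw [hv, ← sum_sub_distrib, ← mul_sub, mul_sum (s := (univ : Finset (Fin M)))]
  rw [sum_comm, mul_sum]
  refine sum_congr rfl fun m _ => congrArg _ ?_
  rw [erase_univ_eq_union (Sm m) i, sum_powerset_union_mul_of_union_eq
    (disjoint_erase_sdiff_insert _ _ _) fun k => (((p - 1).choose k : ℕ) : ℝ)⁻¹]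
  · refine sum_congr rfl fun S _ => ?_
    rw [← add_sum_erase _ _ (empty_mem_powerset _), card_empty, zero_add]
  · intro S _ Z hZ
    rw [← insert_union, hleaf m _ Z hZ, hleaf m S Z hZ]

/-- Decomposition of the Shapley value computed with the Leaf value function
`v(S) = Σ_{m ∈ C(S,x)} f_m P(X ∈ L_m | X_S ∈ L_m^S)` into a sum over the
leaves of per-leaf games on the split variables `S_m`:
`φ_{X_i} = Σ_m φ_{X_i}^m` with
`φ_{X_i}^m = (1/p) Σ_{S' ⊆ S_m\{i}} [C(p-1,|S'|)⁻¹ +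
  Σ_{∅≠Z ⊆ (S_m∪{i})ᶜ} C(p-1,|Z|+|S'|)⁻¹] · f_m ·
  [P(L_m | X_{S'∪{i}} ∈ L_m^{S'∪{i}}) - P(L_m | X_{S'} ∈ L_m^{S'})]`
(membership `m ∈ C(S,x)` is expressed by the indicator `x_S ∈ L_m^S`). -/
theorem shapley_leaf_decomposition
    {Ω : Type*} [MeasurableSpace Ω] (μ : Measure Ω) [IsProbabilityMeasure μ]
    (p M : ℕ) (X : Ω → Fin p → ℝ) (hX : Measurable X)
    (L : Fin M → Fin p → Set ℝ) (hL : ∀ m i, MeasurableSet (L m i))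
    (fm : Fin M → ℝ) (Sm : Fin M → Finset (Fin p))
    (htrivial : ∀ m, ∀ j ∉ Sm m, L m j = Set.univ)
    (x : Fin p → ℝ) (i : Fin p)
    (P : Fin M → Finset (Fin p) → ℝ)
    (hP : ∀ m S, P m S =
      (ProbabilityTheory.cond μ {ω | ∀ j ∈ S, X ω j ∈ L m j}
        {ω | ∀ j, X ω j ∈ L m j}).toReal)
    (hpos : ∀ (m : Fin M) (S : Finset (Fin p)), μ {ω | ∀ j ∈ S, X ω j ∈ L m j} ≠ 0)
    (v : Finset (Fin p) → ℝ)
    (hv : ∀ S, v S = ∑ m : Fin M, fm m *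
      (if ∀ j ∈ S, x j ∈ L m j then P m S else 0)) :
    (p : ℝ)⁻¹ * ∑ S ∈ (Finset.univ.erase i).powerset,
        (((p - 1).choose S.card : ℕ) : ℝ)⁻¹ * (v (insert i S) - v S) =
      ∑ m : Fin M, (p : ℝ)⁻¹ * ∑ S' ∈ ((Sm m).erase i).powerset,
        ((((p - 1).choose S'.card : ℕ) : ℝ)⁻¹ +
            ∑ Z ∈ (Finset.univ \ insert i (Sm m)).powerset.erase ∅,
              (((p - 1).choose (Z.card + S'.card) : ℕ) : ℝ)⁻¹) *
          (fm m *
            ((if ∀ j ∈ insert i S', x j ∈ L m j then P m (insert i S') else 0) -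
              (if ∀ j ∈ S', x j ∈ L m j then P m S' else 0))) :=
  shapley_leaf_decomposition_general μ p M X L fm Sm htrivial x i P hP v hv
end

section
/- Let X = (X_1,...,X_p), p ≥ 5, with independent components, and f(X) = (a_1 X_1 + a_2 X_2) 1_{X_5 ≤ 0} + (a_3 X_3 + a_4 X_4) 1_{X_5 > 0}. For any observation x with x_5 ≤ 0 and any S ⊆ {1,...,p}\{3,5}, the marginal contribution of X_3 when X_5 is not in the coalition equals P(X_5 > 0) · a_3 (x_3 − E[X_3]): that is, E[f(X) | X_{S∪{3}} = x_{S∪{3}}] − E[f(X) | X_S = x_S] = P(X_5 > 0) · a_3 (x_3 − E[X_3]). -/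
/-! Write `f = G + X₃ W` with `G = (a₁X₁ + a₂X₂) 1{X₅ ≤ 0} + a₄X₄ 1{X₅ > 0}` and
`W = a₃ 1{X₅ > 0}`. The event `{X₃ = x₃}` is independent of `G` and of `{X_S = x_S}`, so adding it
to the conditioning event leaves the conditional mean of `G` unchanged; `W` is independent of both
conditioning events, so its conditional mean is `E W` each time. Given `X_{S∪{3}} = x_{S∪{3}}`,
`X₃ W = x₃ W`, while given only `X_S = x_S`, `X₃ W` has mean `E X₃ · E W`. The difference is
therefore `(x₃ - E X₃) · E W = P(X₅ > 0) · a₃ (x₃ - E X₃)`. -/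

open MeasureTheory ProbabilityTheory
attribute [local instance] Classical.propDecidable

namespace ProbabilityTheory

section Conditioning

variable {Ω : Type*} {mΩ : MeasurableSpace Ω} {μ : Measure Ω}

theorem _root_.MeasureTheory.Integrable.cond {E : Type*} [NormedAddCommGroup E] {f : Ω → E}
    (hf : Integrable f μ) (s : Set Ω) : Integrable f μ[|s] := by
  by_cases hs : μ s = 0
  · simp [ProbabilityTheory.cond, Measure.restrict_eq_zero.2 hs]
  · exact hf.restrict.smul_measure (ENNReal.inv_ne_top.2 hs)

theorem integral_cond_eq_inv_mul_setIntegral (f : Ω → ℝ) (s : Set Ω) :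
    ∫ ω, f ω ∂μ[|s] = (μ.real s)⁻¹ * ∫ ω in s, f ω ∂μ := by
  rw [ProbabilityTheory.cond, integral_smul_measure, ENNReal.toReal_inv, smul_eq_mul,
    measureReal_def]

theorem Indep.indepFun_of_measurable {β γ : Type*} [MeasurableSpace β] [MeasurableSpace γ]
    {m₁ m₂ : MeasurableSpace Ω} (hind : Indep m₁ m₂ μ) {f : Ω → β} {g : Ω → γ}
    (hf : Measurable[m₁] f) (hg : Measurable[m₂] g) : IndepFun f g μ := by
  rw [IndepFun_iff_Indep]
  exact indep_of_indep_of_le_right (indep_of_indep_of_le_left hind hf.comap_le) hg.comap_le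

theorem _root_.MeasureTheory.Integrable.mul_ite_one {f : Ω → ℝ} (hf : Integrable f μ)
    {P : Ω → Prop} [DecidablePred P] (hP : MeasurableSet {ω | P ω}) :
    Integrable (fun ω => f ω * if P ω then 1 else 0) μ :=
  hf.mul_bdd (c := 1) (measurable_const.ite hP measurable_const).aestronglyMeasurable
    (ae_of_all _ fun ω => by split_ifs <;> simp)

theorem integral_const_mul_ite_one (a : ℝ) {P : Ω → Prop} [DecidablePred P]
    (hP : MeasurableSet {ω | P ω}) :
    ∫ ω, a * (if P ω then 1 else 0) ∂μ = a * μ.real {ω | P ω} := by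
  simpa [Set.indicator_apply, mul_comm] using integral_indicator_const (μ := μ) a hP

theorem integral_cond_inter_of_indep [IsFiniteMeasure μ] {m₁ m₂ : MeasurableSpace Ω}
    (hm₁ : m₁ ≤ mΩ) (hm₂ : m₂ ≤ mΩ) (hind : Indep m₁ m₂ μ) {f : Ω → ℝ} (hf : Measurable[m₁] f)
    {s t : Set Ω} (hs : MeasurableSet[m₁] s) (ht : MeasurableSet[m₂] t) (hst : μ (s ∩ t) ≠ 0) :
    ∫ ω, f ω ∂μ[|s ∩ t] = ∫ ω, f ω ∂μ[|s] := by
  have hμst : μ (s ∩ t) = μ s * μ t := (Indep_iff _ _ μ).1 hind s t hs ht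
  have hsf : Measurable[m₁] (s.indicator f) := hf.indicator hs
  have ht1 : Measurable[m₂] (t.indicator (1 : Ω → ℝ)) := measurable_const.indicator ht
  have hindep := hind.indepFun_of_measurable hsf ht1
  have hsplit : ∫ ω in s ∩ t, f ω ∂μ = μ.real t * ∫ ω in s, f ω ∂μ := by
    calc ∫ ω in s ∩ t, f ω ∂μ = ∫ ω, (s.indicator f * t.indicator (1 : Ω → ℝ)) ω ∂μ := by
          rw [← integral_indicator ((hm₁ _ hs).inter (hm₂ _ ht))]
          congr 1 with ω
          by_cases hωs : ω ∈ s <;> by_cases hωt : ω ∈ t <;> simp [hωs, hωt]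
      _ = μ.real t * ∫ ω in s, f ω ∂μ := by
          rw [hindep.integral_mul_eq_mul_integral (hsf.mono hm₁ le_rfl).aestronglyMeasurable
            (ht1.mono hm₂ le_rfl).aestronglyMeasurable, integral_indicator (hm₁ _ hs),
            integral_indicator_one (hm₂ _ ht), mul_comm]
  have ht0 : μ.real t ≠ 0 :=
    ENNReal.toReal_ne_zero.2 ⟨right_ne_zero_of_mul (hμst ▸ hst), measure_ne_top μ t⟩
  rw [integral_cond_eq_inv_mul_setIntegral, integral_cond_eq_inv_mul_setIntegral, hsplit,
    measureReal_def, hμst, ENNReal.toReal_mul, ← measureReal_def, ← measureReal_def]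
  field_simp

theorem integral_cond_of_indep [IsProbabilityMeasure μ] {m₁ m₂ : MeasurableSpace Ω}
    (hm₁ : m₁ ≤ mΩ) (hm₂ : m₂ ≤ mΩ) (hind : Indep m₁ m₂ μ) {f : Ω → ℝ} (hf : Measurable[m₁] f)
    {t : Set Ω} (ht : MeasurableSet[m₂] t) (htμ : μ t ≠ 0) :
    ∫ ω, f ω ∂μ[|t] = ∫ ω, f ω ∂μ := by
  rw [← Set.univ_inter t] at htμ ⊢
  rw [integral_cond_inter_of_indep hm₁ hm₂ hind hf MeasurableSet.univ ht htμ, cond_univ]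

end Conditioning

section SigmaOf

variable {Ω ι β : Type*} {mΩ : MeasurableSpace Ω} [MeasurableSpace β] {μ : Measure Ω}
  {X : ι → Ω → β}

abbrev sigmaOf (X : ι → Ω → β) (T : Set ι) : MeasurableSpace Ω :=
  ⨆ i ∈ T, MeasurableSpace.comap (X i) inferInstance

theorem sigmaOf_le (hXm : ∀ i, Measurable (X i)) (T : Set ι) : sigmaOf X T ≤ mΩ :=
  iSup₂_le fun i _ => (hXm i).comap_le

theorem sigmaOf_mono {T U : Set ι} (hTU : T ⊆ U) : sigmaOf X T ≤ sigmaOf X U :=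
  biSup_mono hTU

theorem measurable_sigmaOf {T : Set ι} {i : ι} (hi : i ∈ T) : Measurable[sigmaOf X T] (X i) :=
  Measurable.of_comap_le (le_iSup₂ (f := fun j (_ : j ∈ T) => MeasurableSpace.comap (X j) _) i hi)

theorem measurableSet_sigmaOf_forall_eq [MeasurableSingletonClass β] {T : Set ι} {S : Finset ι}
    (hST : ↑S ⊆ T) (x : ι → β) : MeasurableSet[sigmaOf X T] {ω | ∀ i ∈ S, X i ω = x i} := by
  simp only [Set.ofPred_forall]
  exact Finset.measurableSet_biInter S fun i hi =>
    measurable_sigmaOf (hST hi) (measurableSet_singleton (x i))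

theorem iIndepFun.indep_sigmaOf (hXm : ∀ i, Measurable (X i)) (hX : iIndepFun X μ) {T U : Set ι}
    (hTU : Disjoint T U) : Indep (sigmaOf X T) (sigmaOf X U) μ :=
  indep_iSup_of_disjoint (fun i => (hXm i).comap_le) hX hTU

end SigmaOf

section Marginal

variable {Ω ι : Type*} {mΩ : MeasurableSpace Ω} {μ : Measure Ω} [IsProbabilityMeasure μ]
  {X : ι → Ω → ℝ}

theorem integral_cond_insert_sub_integral_cond [DecidableEq ι] (hXm : ∀ i, Measurable (X i))
    (hX : iIndepFun X μ) (x : ι → ℝ) {S : Finset ι} {j : ι} (hjS : j ∉ S)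
    (hXji : Integrable (X j) μ) {G W : Ω → ℝ}
    (hG : Measurable[sigmaOf X {j}ᶜ] G) (hGi : Integrable G μ)
    (hW : Measurable[sigmaOf X (insert j ↑S)ᶜ] W) (hWi : Integrable W μ) {F : Ω → ℝ}
    (hF : ∀ ω, F ω = G ω + X j ω * W ω) (hpos : μ {ω | ∀ i ∈ S ∪ {j}, X i ω = x i} ≠ 0) :
    ∫ ω, F ω ∂μ[|{ω | ∀ i ∈ S ∪ {j}, X i ω = x i}] - ∫ ω, F ω ∂μ[|{ω | ∀ i ∈ S, X i ω = x i}] =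
    (x j - ∫ ω, X j ω ∂μ) * ∫ ω, W ω ∂μ := by
  set A := {ω | ∀ i ∈ S ∪ {j}, X i ω = x i}
  set B := {ω | ∀ i ∈ S, X i ω = x i}
  have hAB : A = B ∩ {ω | X j ω = x j} := by
    ext ω
    simp [A, B, or_imp, forall_and, and_comm]
  have hXjW : IndepFun (X j) W μ := by
    have hdisj : Disjoint {j} (insert j (S : Set ι))ᶜ :=
      Set.disjoint_singleton_left.2 (Set.notMem_compl_iff.2 (Set.mem_insert j _))
    exact (hX.indep_sigmaOf hXm hdisj).indepFun_of_measurable (measurable_sigmaOf rfl) hW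
  have hXjWi : Integrable (fun ω => X j ω * W ω) μ := hXjW.integrable_mul hXji hWi
  have hBpos : μ B ≠ 0 := fun h => hpos (measure_mono_null (hAB ▸ Set.inter_subset_left) h)
  have hAm : MeasurableSet[sigmaOf X (insert j ↑S)] A :=
    measurableSet_sigmaOf_forall_eq (by simp) x
  have hG_cond : ∫ ω, G ω ∂μ[|A] = ∫ ω, G ω ∂μ[|B] := by
    have hCm : MeasurableSet[sigmaOf X {j}] {ω | X j ω = x j} :=
      measurable_sigmaOf (Set.mem_singleton j) (measurableSet_singleton _)
    rw [hAB] at hpos ⊢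
    exact integral_cond_inter_of_indep (sigmaOf_le hXm _) (sigmaOf_le hXm _)
      (hX.indep_sigmaOf hXm disjoint_compl_left) hG
      (measurableSet_sigmaOf_forall_eq (Set.disjoint_singleton_right.2 hjS).subset_compl_right x)
      hCm hpos
  have hW_cond : ∫ ω, W ω ∂μ[|A] = ∫ ω, W ω ∂μ :=
    integral_cond_of_indep (sigmaOf_le hXm _) (sigmaOf_le hXm _)
      (hX.indep_sigmaOf hXm disjoint_compl_left) hW hAm hpos
  have hXjW_cond : ∫ ω, X j ω * W ω ∂μ[|B] = ∫ ω, X j ω * W ω ∂μ :=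
    integral_cond_of_indep (sigmaOf_le hXm _) (sigmaOf_le hXm _)
      (hX.indep_sigmaOf hXm disjoint_compl_left)
      ((measurable_sigmaOf hjS).mul
        (hW.mono (sigmaOf_mono (Set.compl_subset_compl.2 (Set.subset_insert j _))) le_rfl))
      (measurableSet_sigmaOf_forall_eq subset_rfl x) hBpos
  have hXj_on_A : ∫ ω, X j ω * W ω ∂μ[|A] = x j * ∫ ω, W ω ∂μ[|A] := by
    rw [← integral_const_mul]
    refine integral_congr_ae ?_
    filter_upwards [ae_cond_mem (sigmaOf_le hXm _ _ hAm)] with ω hω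
    rw [hAB] at hω
    rw [hω.2]
  simp only [hF]
  rw [integral_add (hGi.cond A) (hXjWi.cond A), integral_add (hGi.cond B) (hXjWi.cond B),
    hG_cond, hXj_on_A, hW_cond, hXjW_cond, hXjW.integral_fun_mul_eq_mul_integral
      hXji.aestronglyMeasurable hWi.aestronglyMeasurable]
  ring

end Marginal

end ProbabilityTheory

/-- For `f(X) = (a₁X₁+a₂X₂)1_{X₅≤0} + (a₃X₃+a₄X₄)1_{X₅>0}` with independent
components and `x₅ ≤ 0`, the marginal contribution of `X₃` to a coalition `S`
not containing `X₅` equals `P(X₅ > 0)·a₃(x₃ − E[X₃])`.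
(Indices `0,…,4` stand for `X₁,…,X₅`.) -/
theorem marginal_contribution_without_X5
    {Ω : Type*} [MeasurableSpace Ω] (μ : Measure Ω) [IsProbabilityMeasure μ]
    (p : ℕ) (hp : 5 ≤ p) (X : Fin p → Ω → ℝ) (hXm : ∀ i, Measurable (X i))
    (hindep : ProbabilityTheory.iIndepFun X μ)
    (hint : ∀ i, Integrable (X i) μ)
    (a₁ a₂ a₃ a₄ : ℝ) (x : Fin p → ℝ)
    (S : Finset (Fin p))
    (hS : S ⊆ Finset.univ \ {⟨2, by omega⟩, ⟨4, by omega⟩})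
    (hpos : μ {ω | ∀ i ∈ S ∪ {(⟨2, by omega⟩ : Fin p)}, X i ω = x i} ≠ 0) :
    (∫ ω, ((a₁ * X ⟨0, by omega⟩ ω + a₂ * X ⟨1, by omega⟩ ω) *
          (if X ⟨4, by omega⟩ ω ≤ 0 then (1 : ℝ) else 0) +
        (a₃ * X ⟨2, by omega⟩ ω + a₄ * X ⟨3, by omega⟩ ω) *
          (if 0 < X ⟨4, by omega⟩ ω then (1 : ℝ) else 0))
        ∂(ProbabilityTheory.cond μ
          {ω | ∀ i ∈ S ∪ {(⟨2, by omega⟩ : Fin p)}, X i ω = x i})) -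
      (∫ ω, ((a₁ * X ⟨0, by omega⟩ ω + a₂ * X ⟨1, by omega⟩ ω) *
          (if X ⟨4, by omega⟩ ω ≤ 0 then (1 : ℝ) else 0) +
        (a₃ * X ⟨2, by omega⟩ ω + a₄ * X ⟨3, by omega⟩ ω) *
          (if 0 < X ⟨4, by omega⟩ ω then (1 : ℝ) else 0))
        ∂(ProbabilityTheory.cond μ {ω | ∀ i ∈ S, X i ω = x i})) =
    (μ {ω | 0 < X ⟨4, by omega⟩ ω}).toReal *
      (a₃ * (x ⟨2, by omega⟩ - ∫ ω, X ⟨2, by omega⟩ ω ∂μ)) := by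
  set i₀ : Fin p := ⟨0, by omega⟩
  set i₁ : Fin p := ⟨1, by omega⟩
  set i₂ : Fin p := ⟨2, by omega⟩
  set i₃ : Fin p := ⟨3, by omega⟩
  set i₄ : Fin p := ⟨4, by omega⟩
  have h₂S : i₂ ∉ S := fun h => by simpa [i₂] using hS h
  have h₄S : i₄ ∉ S := fun h => by simpa [i₄] using hS h
  have hG : Measurable[sigmaOf X {i₂}ᶜ] fun ω =>
      (a₁ * X i₀ ω + a₂ * X i₁ ω) * (if X i₄ ω ≤ 0 then 1 else 0) +
        a₄ * X i₃ ω * (if 0 < X i₄ ω then 1 else 0) := by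
    have hXi : ∀ i ≠ i₂, Measurable[sigmaOf X {i₂}ᶜ] (X i) := fun i hi => measurable_sigmaOf hi
    have hX₄ := hXi i₄ (by simp [i₂, i₄])
    exact ((((hXi i₀ (by simp [i₀, i₂])).const_mul a₁).add
      ((hXi i₁ (by simp [i₁, i₂])).const_mul a₂)).mul
      (measurable_const.ite (measurableSet_le hX₄ measurable_const) measurable_const)).add
      (((hXi i₃ (by simp [i₃, i₂])).const_mul a₄).mul
        (measurable_const.ite (measurableSet_lt measurable_const hX₄) measurable_const))
  have hW : Measurable[sigmaOf X (insert i₂ ↑S)ᶜ] fun ω => a₃ * if 0 < X i₄ ω then 1 else 0 :=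
    (measurable_const.ite (measurableSet_lt measurable_const
      (measurable_sigmaOf (by simp [h₄S, i₂, i₄]))) measurable_const).const_mul a₃
  have h₄le : MeasurableSet {ω | X i₄ ω ≤ 0} := measurableSet_le (hXm i₄) measurable_const
  have h₄pos : MeasurableSet {ω | 0 < X i₄ ω} := measurableSet_lt measurable_const (hXm i₄)
  refine (integral_cond_insert_sub_integral_cond hXm hindep x h₂S (hint i₂) hG
    (((((hint i₀).const_mul a₁).add ((hint i₁).const_mul a₂)).mul_ite_one h₄le).add
      (((hint i₃).const_mul a₄).mul_ite_one h₄pos))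
    hW ((integrable_const a₃).mul_ite_one h₄pos) (fun ω => by ring) hpos).trans ?_
  rw [integral_const_mul_ite_one _ h₄pos, measureReal_def]
  ring
end
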